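/- Let D be a triangulated category with a t-structure 𝒰 = (U^{≤0}, U^{≥0}) with heart ℋ = U^{≤0} ∩ U^{≥0}, let m be a positive integer, and let S be a triangulated full subcategory of D such that ℋ ⊆ S and (S ∩ U^{≤0}, S ∩ U^{≥0}) is a t-structure on S. Let (Y^{≤0}, Y^{≥0}) be a t-structure on S with S ∩ U^{≤-m} ⊆ Y^{≤0} ⊆ S ∩ U^{≤0}. Then U^{≤-m} * (Y^{≤0} ∩ U^{≥-(m-1)}) = U^{≤-m} * Y^{≤0} and (Y^{≥1} ∩ U^{≤0})[1] * U^{≥0} = Y^{≥0} * U^{≥0}; in particular, the image under the HRS tilting bijection of Proposition 4.1 of the s-torsion pair corresponding to (Y^{≤0}, Y^{≥0}) is the pair (U^{≤-m} * Y^{≤0}, Y^{≥0} * U^{≥0}). -/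

import Mathlib

open CategoryTheory Category Limits Pretriangulated

universe v u

variable (D : Type u) [Category.{v} D] [Preadditive D] [HasZeroObject D]
  [HasShift D ℤ] [∀ n : ℤ, (shiftFunctor D n).Additive]
  [Pretriangulated D] [HasBinaryBiproducts D]

/-- `shiftSet D S n` is the full subcategory `S[n]`: objects isomorphic to `X⟦n⟧`
with `X ∈ S`. -/
def shiftSet (S : Set D) (n : ℤ) : Set D :=
  {A | ∃ B ∈ S, Nonempty (A ≅ B⟦n⟧)}

/-- `starSet D X Y` is `X * Y`: the class of objects `A` admitting a distinguished
triangle `X → A → Y → X[1]` with `X ∈ 𝒳` and `Y ∈ 𝒴`. -/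
def starSet (X Y : Set D) : Set D :=
  {A | ∃ (B C : D) (f : B ⟶ A) (g : A ⟶ C) (h : C ⟶ B⟦(1 : ℤ)⟧),
    B ∈ X ∧ C ∈ Y ∧ Triangle.mk f g h ∈ distTriang D}

/-- `Hom(X, Y) = 0`: every morphism from an object of `X` to an object of `Y` is zero. -/
def homZero (X Y : Set D) : Prop :=
  ∀ A ∈ X, ∀ B ∈ Y, ∀ f : A ⟶ B, f = 0

/-- a class of objects closed under isomorphisms -/
def isoClosed (S : Set D) : Prop :=
  ∀ ⦃A B : D⦄, (A ≅ B) → A ∈ S → B ∈ S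

/-- an additive full subcategory (closed under isomorphisms) which is closed under
direct summands -/
structure AdditiveClosed (S : Set D) : Prop where
  iso : isoClosed D S
  zero : ∀ Z : D, IsZero Z → Z ∈ S
  sum : ∀ A ∈ S, ∀ B ∈ S, (A ⊞ B) ∈ S
  summand : ∀ A ∈ S, ∀ (X : D) (i : X ⟶ A) (p : A ⟶ X), i ≫ p = 𝟙 X → X ∈ S

/-- a torsion pair `(U, V)` in the triangulated category `D` -/
structure IsTorsionPair (U V : Set D) : Prop where
  addU : AdditiveClosed D U
  addV : AdditiveClosed D V
  hom_zero : homZero D U V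
  cover : ∀ A : D, A ∈ starSet D U V

/-- `t₁ ≼ t₂` for torsion pairs in a triangulated category: `U₁ ⊆ U₂` and `U₁[1] ⊆ U₂`. -/
def torsLE (U₁ U₂ : Set D) : Prop :=
  U₁ ⊆ U₂ ∧ shiftSet D U₁ 1 ⊆ U₂

/-- a torsion pair `(T, F)` in an (extension-closed) full subcategory `H` of `D`:
`T` and `F` are additive subcategories of `H` closed under direct summands,
`Hom(T, F) = 0`, and every object of `H` admits a distinguished triangle
`T → X → F → T[1]` with `T ∈ 𝒯`, `F ∈ ℱ`. -/
structure IsTorsionPairIn (H T F : Set D) : Prop where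
  subT : T ⊆ H
  subF : F ⊆ H
  isoT : ∀ ⦃A B : D⦄, (A ≅ B) → A ∈ T → B ∈ H → B ∈ T
  isoF : ∀ ⦃A B : D⦄, (A ≅ B) → A ∈ F → B ∈ H → B ∈ F
  zeroT : ∀ Z : D, IsZero Z → Z ∈ H → Z ∈ T
  zeroF : ∀ Z : D, IsZero Z → Z ∈ H → Z ∈ F
  sumT : ∀ A ∈ T, ∀ B ∈ T, (A ⊞ B) ∈ T
  sumF : ∀ A ∈ F, ∀ B ∈ F, (A ⊞ B) ∈ F
  summandT : ∀ A ∈ T, ∀ (X : D) (i : X ⟶ A) (p : A ⟶ X), i ≫ p = 𝟙 X → X ∈ H → X ∈ T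
  summandF : ∀ A ∈ F, ∀ (X : D) (i : X ⟶ A) (p : A ⟶ X), i ≫ p = 𝟙 X → X ∈ H → X ∈ F
  hom_zero : homZero D T F
  cover : ∀ A ∈ H, A ∈ starSet D T F

/-- an `s`-torsion pair in `H`: a torsion pair with moreover `Hom(T, F[-1]) = 0`. -/
structure IsSTorsionPairIn (H T F : Set D) extends IsTorsionPairIn D H T F : Prop where
  neg_hom_zero : ∀ A ∈ T, ∀ B ∈ F, ∀ f : A ⟶ B⟦(-1 : ℤ)⟧, f = 0

/-- the relation `≼` for torsion pairs in a subcategory `H`: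
`Hom(T, F') = 0` and `Hom(T, F'[-1]) = 0`. -/
def torsLEIn (T F' : Set D) : Prop :=
  homZero D T F' ∧ homZero D T (shiftSet D F' (-1))

/-- a `t`-structure `(L, G) = (S^{≤0}, S^{≥0})` on a triangulated (full) subcategory `S`
of `D` (take `S = Set.univ` for a `t`-structure on `D` itself). -/
structure IsTStructureOn (S L G : Set D) : Prop where
  subL : L ⊆ S
  subG : G ⊆ S
  isoL : ∀ ⦃A B : D⦄, (A ≅ B) → A ∈ L → B ∈ S → B ∈ L
  isoG : ∀ ⦃A B : D⦄, (A ≅ B) → A ∈ G → B ∈ S → B ∈ G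
  hom_zero : homZero D L (shiftSet D G (-1))
  cover : ∀ A ∈ S, A ∈ starSet D L (shiftSet D G (-1))
  shiftL : L ⊆ shiftSet D L (-1)
  shiftG : shiftSet D G (-1) ⊆ G

/-- a `t`-structure `(L, G) = (D^{≤0}, D^{≥0})` on `D`. -/
def IsTStructure (L G : Set D) : Prop := IsTStructureOn D Set.univ L G

/-- a triangulated full subcategory of `D`. -/
structure IsTriangulatedSub (S : Set D) : Prop where
  iso : isoClosed D S
  zero : ∀ Z : D, IsZero Z → Z ∈ S
  shift : ∀ (n : ℤ), ∀ A ∈ S, A⟦n⟧ ∈ S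
  ext₂ : ∀ (T : Triangle D), (T ∈ distTriang D) → T.obj₁ ∈ S → T.obj₃ ∈ S → T.obj₂ ∈ S

/-- an `m`-extended heart on `D`: a full subcategory of the form
`V^{≥ -(m-1)} ∩ V^{≤ 0}` for some `t`-structure `(V^{≤0}, V^{≥0})` on `D`. -/
def IsExtendedHeart (m : ℤ) (E : Set D) : Prop :=
  ∃ L G : Set D, IsTStructure D L G ∧ E = shiftSet D G (m - 1) ∩ L

/-- the relation `E₁ ≤ E₂` for `m`-extended hearts:
`E₁ ⊆ E₂[m] * E₂` and `E₂ ⊆ E₁ * E₁[-m]`. -/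
def extHeartLE (m : ℤ) (E₁ E₂ : Set D) : Prop :=
  E₁ ⊆ starSet D (shiftSet D E₂ m) E₂ ∧ E₂ ⊆ starSet D E₁ (shiftSet D E₁ (-m))

/-! Both equalities come from truncating with respect to `𝒰` inside `S`. Given a triangle
`X → A → Y → X[1]` with `X ∈ U^{≤-m}` and `Y ∈ Y^{≤0}`, truncate `Y` as `X' → Y → Y'' → X'[1]` with
`X' ∈ U^{≤-m}` and `Y'' ∈ U^{≥-(m-1)}`. As `X'[1] ∈ S ∩ U^{≤-m} ⊆ Y^{≤0}`, also `Y'' ∈ Y^{≤0}`. The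
cone `Z` of the composite `A → Y → Y''` satisfies `Hom(Z, U^{≥-m}) = 0` because the cones `X[1]`
and `X'[1]` of the two factors do, so `Z[-1] → A → Y''` is the required triangle.
Dually, given `Z → A → W` with `Z ∈ Y^{≥0}` and `W ∈ U^{≥0}`, truncate `Z` as `Z₁ → Z → Z₀` with
`Z₁ ∈ U^{≤-1}` and `Z₀ ∈ S ∩ U^{≥0}`, which lies in `Y^{≥0}` because `Y^{≤0} ⊆ U^{≤0}`. Hence
`Z₁ ∈ Y^{≥0}`, and the cone `Q` of `Z₁ → Z → A` lies in `U^{≥0}` because `Hom(U^{≤-1}, -)` kills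
the cones `Z₀` and `W` of the two factors. -/

section

variable {𝒞 : Type*} [Category 𝒞]

lemma hom_eq_zero_of_iso [HasZeroMorphisms 𝒞] {X Y X' Y' : 𝒞} (e₁ : X ≅ X') (e₂ : Y ≅ Y')
    (h : ∀ g : X' ⟶ Y', g = 0) (f : X ⟶ Y) : f = 0 := by
  simpa using congrArg (fun g => e₁.hom ≫ g ≫ e₂.inv) (h (e₁.inv ≫ f ≫ e₂.hom))

variable [HasShift 𝒞 ℤ]

lemma mem_shiftSet_of_iso {T : Set 𝒞} {n : ℤ} {A A' : 𝒞} (e : A ≅ A')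
    (h : A' ∈ shiftSet 𝒞 T n) : A ∈ shiftSet 𝒞 T n := by
  obtain ⟨B, hB, ⟨e'⟩⟩ := h
  exact ⟨B, hB, ⟨e ≪≫ e'⟩⟩

lemma shift_mem_shiftSet {T : Set 𝒞} {A : 𝒞} (hA : A ∈ T) (n : ℤ) :
    A⟦n⟧ ∈ shiftSet 𝒞 T n :=
  ⟨A, hA, ⟨Iso.refl _⟩⟩

lemma mem_shiftSet_zero {T : Set 𝒞} {A : 𝒞} (hA : A ∈ T) : A ∈ shiftSet 𝒞 T 0 :=
  ⟨A, hA, ⟨((shiftFunctorZero 𝒞 ℤ).app A).symm⟩⟩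

lemma shiftSet_mono {T T' : Set 𝒞} (h : T ⊆ T') (n : ℤ) :
    shiftSet 𝒞 T n ⊆ shiftSet 𝒞 T' n := by
  rintro A ⟨B, hB, e⟩
  exact ⟨B, h hB, e⟩

lemma shift_mem_shiftSet_of_add_eq {T : Set 𝒞} {n k l : ℤ} {A : 𝒞}
    (hA : A ∈ shiftSet 𝒞 T n) (h : n + k = l) : A⟦k⟧ ∈ shiftSet 𝒞 T l := by
  obtain ⟨B, hB, ⟨e⟩⟩ := hA
  exact ⟨B, hB, ⟨(shiftFunctor 𝒞 k).mapIso e ≪≫ ((shiftFunctorAdd' 𝒞 n k l h).app B).symm⟩⟩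

lemma shiftSet_shiftSet_subset {T : Set 𝒞} {a b c : ℤ} (h : a + b = c) :
    shiftSet 𝒞 (shiftSet 𝒞 T a) b ⊆ shiftSet 𝒞 T c := by
  rintro A ⟨B, hB, ⟨e⟩⟩
  exact mem_shiftSet_of_iso e (shift_mem_shiftSet_of_add_eq hB h)

lemma mem_shiftSet_neg_inter {T L : Set 𝒞} {n : ℤ} {A : 𝒞} (hA : A ∈ T)
    (hA' : A ∈ shiftSet 𝒞 L n) : A ∈ shiftSet 𝒞 (shiftSet 𝒞 T (-n) ∩ L) n := by
  obtain ⟨B, hB, ⟨e⟩⟩ := hA'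
  refine ⟨B, ⟨⟨A, hA, ⟨?_⟩⟩, hB⟩, ⟨e⟩⟩
  exact ((shiftFunctorCompIsoId 𝒞 n (-n) (add_neg_cancel n)).app B).symm ≪≫
    (shiftFunctor 𝒞 (-n)).mapIso e.symm

variable [Preadditive 𝒞] [∀ n : ℤ, (shiftFunctor 𝒞 n).Additive]

lemma hom_eq_zero_of_shift (n : ℤ) {X Y : 𝒞} (h : ∀ g : X⟦n⟧ ⟶ Y⟦n⟧, g = 0)
    (f : X ⟶ Y) : f = 0 :=
  (shiftFunctor 𝒞 n).map_injective ((h _).trans (Functor.map_zero _ _ _).symm)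

variable [HasZeroObject 𝒞] [Pretriangulated 𝒞]

section ConeOfComposite

variable {X Y Z C₁ C₂ C : 𝒞} {u : X ⟶ Y} {v : Y ⟶ Z} {a₁ : Y ⟶ C₁}
  {b₁ : C₁ ⟶ X⟦(1 : ℤ)⟧} {a₂ : Z ⟶ C₂} {b₂ : C₂ ⟶ Y⟦(1 : ℤ)⟧} {a : Z ⟶ C}
  {b : C ⟶ X⟦(1 : ℤ)⟧}

/- Without the octahedral axiom the cone `C` of `u ≫ v` is not known to be an extension of the
cones `C₁` of `u` and `C₂` of `v`, but it is still killed by every `Hom(-, W)` that kills both. -/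
lemma cone_comp_hom_eq_zero (h₁ : Triangle.mk u a₁ b₁ ∈ distTriang 𝒞)
    (h₂ : Triangle.mk v a₂ b₂ ∈ distTriang 𝒞) (h : Triangle.mk (u ≫ v) a b ∈ distTriang 𝒞)
    {W : 𝒞} (hW₁ : ∀ φ : C₁ ⟶ W, φ = 0) (hW₂ : ∀ φ : C₂ ⟶ W, φ = 0) (φ : C ⟶ W) :
    φ = 0 := by
  have huva : u ≫ v ≫ a = 0 := (assoc _ _ _).symm.trans (comp_distTriang_mor_zero₁₂ _ h)
  have hbuv : (b ≫ u⟦(1 : ℤ)⟧') ≫ v⟦(1 : ℤ)⟧' = 0 := by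
    rw [assoc, ← Functor.map_comp]
    exact comp_distTriang_mor_zero₃₁ _ h
  have hvaφ : v ≫ a ≫ φ = 0 := by
    obtain ⟨τ, hτ⟩ : ∃ τ : C₁ ⟶ W, v ≫ a ≫ φ = a₁ ≫ τ := Triangle.yoneda_exact₂ _ h₁ _
      (show u ≫ v ≫ a ≫ φ = 0 by rw [reassoc_of% huva, zero_comp])
    rw [hτ, hW₁ τ, comp_zero]
  have haφ : a ≫ φ = 0 := by
    obtain ⟨τ, hτ⟩ : ∃ τ : C₂ ⟶ W, a ≫ φ = a₂ ≫ τ := Triangle.yoneda_exact₂ _ h₂ _ hvaφ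
    rw [hτ, hW₂ τ, comp_zero]
  obtain ⟨χ, hχ⟩ : ∃ χ : X⟦(1 : ℤ)⟧ ⟶ W, φ = b ≫ χ := Triangle.yoneda_exact₃ _ h φ haφ
  obtain ⟨χ', hχ'⟩ : ∃ χ' : Y⟦(1 : ℤ)⟧ ⟶ W, χ = (-u⟦(1 : ℤ)⟧') ≫ χ' :=
    Triangle.yoneda_exact₃ _ (rot_of_distTriang _ h₁) χ (hW₁ _)
  obtain ⟨θ, hθ⟩ : ∃ θ : C ⟶ C₂, b ≫ u⟦(1 : ℤ)⟧' = θ ≫ b₂ :=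
    Triangle.coyoneda_exact₁ _ h₂ _ hbuv
  rw [hχ, hχ', Preadditive.neg_comp, Preadditive.comp_neg, reassoc_of% hθ, hW₂ (b₂ ≫ χ'),
    comp_zero, neg_zero]

lemma hom_cone_comp_eq_zero (h₁ : Triangle.mk u a₁ b₁ ∈ distTriang 𝒞)
    (h₂ : Triangle.mk v a₂ b₂ ∈ distTriang 𝒞) (h : Triangle.mk (u ≫ v) a b ∈ distTriang 𝒞)
    {V : 𝒞} (hV₁ : ∀ φ : V ⟶ C₁, φ = 0) (hV₂ : ∀ φ : V ⟶ C₂, φ = 0) (φ : V ⟶ C) :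
    φ = 0 := by
  have huva : u ≫ v ≫ a = 0 := (assoc _ _ _).symm.trans (comp_distTriang_mor_zero₁₂ _ h)
  have hbuv : b ≫ u⟦(1 : ℤ)⟧' ≫ v⟦(1 : ℤ)⟧' = 0 := by
    rw [← Functor.map_comp]
    exact comp_distTriang_mor_zero₃₁ _ h
  have hφbu : (φ ≫ b) ≫ u⟦(1 : ℤ)⟧' = 0 := by
    obtain ⟨θ, hθ⟩ : ∃ θ : V ⟶ C₂, (φ ≫ b) ≫ u⟦(1 : ℤ)⟧' = θ ≫ b₂ :=
      Triangle.coyoneda_exact₁ _ h₂ _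
        (show ((φ ≫ b) ≫ u⟦(1 : ℤ)⟧') ≫ v⟦(1 : ℤ)⟧' = 0 by rw [assoc, assoc, hbuv, comp_zero])
    rw [hθ, hV₂ θ, zero_comp]
  have hφb : φ ≫ b = 0 := by
    obtain ⟨θ, hθ⟩ : ∃ θ : V ⟶ C₁, φ ≫ b = θ ≫ b₁ := Triangle.coyoneda_exact₁ _ h₁ _ hφbu
    rw [hθ, hV₁ θ, zero_comp]
  obtain ⟨ψ, hψ⟩ : ∃ ψ : V ⟶ Z, φ = ψ ≫ a := Triangle.coyoneda_exact₃ _ h φ hφb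
  obtain ⟨ψ', hψ'⟩ : ∃ ψ' : V ⟶ Y, ψ = ψ' ≫ v := Triangle.coyoneda_exact₂ _ h₂ ψ (hV₂ _)
  obtain ⟨ψ'', hψ''⟩ : ∃ ψ'' : V ⟶ X, ψ' = ψ'' ≫ u := Triangle.coyoneda_exact₂ _ h₁ ψ' (hV₁ _)
  rw [hψ, hψ', hψ'', assoc, assoc, huva, comp_zero]

end ConeOfComposite

lemma starSet_mono {X X' Y Y' : Set 𝒞} (hX : X ⊆ X') (hY : Y ⊆ Y') :
    starSet 𝒞 X Y ⊆ starSet 𝒞 X' Y' := by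
  rintro A ⟨B, C, f, g, h, hB, hC, hT⟩
  exact ⟨B, C, f, g, h, hX hB, hY hC, hT⟩

lemma obj₂_mem_starSet {X Y : Set 𝒞} {T : Triangle 𝒞} (hT : T ∈ distTriang 𝒞)
    (h₁ : T.obj₁ ∈ X) (h₃ : T.obj₃ ∈ Y) : T.obj₂ ∈ starSet 𝒞 X Y :=
  ⟨_, _, T.mor₁, T.mor₂, T.mor₃, h₁, h₃, hT⟩

lemma mem_starSet_of_iso {X Y : Set 𝒞} {A A' : 𝒞} (e : A ≅ A') (hA : A ∈ starSet 𝒞 X Y) :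
    A' ∈ starSet 𝒞 X Y := by
  obtain ⟨B, C, f, g, h, hB, hC, hT⟩ := hA
  refine ⟨B, C, f ≫ e.hom, e.inv ≫ g, h, hB, hC, isomorphic_distinguished _ hT _ ?_⟩
  exact Triangle.isoMk _ _ (Iso.refl B) e.symm (Iso.refl C) (by simp [Triangle.mk])
    (by simp [Triangle.mk]) (by simp [Triangle.mk])

lemma shift_mem_starSet {X Y : Set 𝒞} {A : 𝒞} (hA : A ∈ starSet 𝒞 X Y) (n : ℤ) :
    A⟦n⟧ ∈ starSet 𝒞 (shiftSet 𝒞 X n) (shiftSet 𝒞 Y n) := by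
  obtain ⟨B, C, f, g, h, hB, hC, hT⟩ := hA
  exact obj₂_mem_starSet (Triangle.shift_distinguished _ hT n) (shift_mem_shiftSet hB n)
    (shift_mem_shiftSet hC n)

lemma IsTriangulatedSub.shiftSet_subset {S T : Set 𝒞} (hS : IsTriangulatedSub 𝒞 S)
    (hT : T ⊆ S) (n : ℤ) : shiftSet 𝒞 T n ⊆ S := by
  rintro A ⟨B, hB, ⟨e⟩⟩
  exact hS.iso e.symm (hS.shift n B (hT hB))

namespace IsTStructureOn

variable {S L G : Set 𝒞}

lemma shift_one_mem_aisle (hT : IsTStructureOn 𝒞 S L G) {A : 𝒞} (hA : A ∈ L)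
    (hA' : A⟦(1 : ℤ)⟧ ∈ S) : A⟦(1 : ℤ)⟧ ∈ L := by
  obtain ⟨B, hB, ⟨e⟩⟩ := hT.shiftL hA
  exact hT.isoL ((shiftFunctor 𝒞 (1 : ℤ)).mapIso e ≪≫
    (shiftFunctorCompIsoId 𝒞 (-1 : ℤ) 1 (neg_add_cancel 1)).app B).symm hB hA'

lemma hom_shift_one_eq_zero (hT : IsTStructureOn 𝒞 S L G) {A B : 𝒞} (hA : A ∈ L)
    (hB : B ∈ G) (f : A⟦(1 : ℤ)⟧ ⟶ B) : f = 0 :=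
  hom_eq_zero_of_shift (-1) (hom_eq_zero_of_iso
    ((shiftFunctorCompIsoId 𝒞 (1 : ℤ) (-1) (add_neg_cancel 1)).app A) (Iso.refl _)
    (hT.hom_zero A hA _ (shift_mem_shiftSet hB (-1)))) f

lemma shiftSet_zero_coaisle_subset (hT : IsTStructureOn 𝒞 S L G) (hS : isoClosed 𝒞 S) :
    shiftSet 𝒞 G 0 ⊆ G := by
  rintro A ⟨B, hB, ⟨e⟩⟩
  have e' : B ≅ A := ((shiftFunctorZero 𝒞 ℤ).app B).symm ≪≫ e.symm
  exact hT.isoG e' hB (hS e' (hT.subG hB))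

lemma mem_aisle_of_hom_eq_zero (hT : IsTStructureOn 𝒞 S L G) {A : 𝒞} (hA : A ∈ S)
    (h : ∀ B ∈ shiftSet 𝒞 G (-1), ∀ f : A ⟶ B, f = 0) : A ∈ L := by
  obtain ⟨B, C, f, g, k, hB, hC, hBAC⟩ := hT.cover A hA
  have hC₀ : IsZero C := by
    rw [IsZero.iff_id_eq_zero]
    obtain ⟨τ, hτ⟩ : ∃ τ : B⟦(1 : ℤ)⟧ ⟶ C, 𝟙 C = k ≫ τ := Triangle.yoneda_exact₃ _ hBAC (𝟙 C)
      (show g ≫ 𝟙 C = 0 by rw [h C hC g, zero_comp])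
    rw [hτ, hT.hom_shift_one_eq_zero hB (hT.shiftG hC) τ, comp_zero]
  have : IsIso f := (Triangle.isZero₃_iff_isIso₁ _ hBAC).1 hC₀
  exact hT.isoL (asIso f) hB hA

lemma mem_coaisle_of_hom_eq_zero (hT : IsTStructureOn 𝒞 S L G) {A : 𝒞} (hA : A ∈ S)
    (hA' : A⟦(-1 : ℤ)⟧ ∈ S) (h : ∀ P ∈ L, ∀ f : P⟦(1 : ℤ)⟧ ⟶ A, f = 0) : A ∈ G := by
  obtain ⟨B, C, f, g, k, hB, ⟨C₀, hC₀, ⟨eC⟩⟩, hBAC⟩ := hT.cover _ hA'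
  have eA : A⟦(-1 : ℤ)⟧⟦(1 : ℤ)⟧ ≅ A := (shiftFunctorCompIsoId 𝒞 (-1 : ℤ) 1 (neg_add_cancel 1)).app A
  have hf : f = 0 := hom_eq_zero_of_shift 1 (hom_eq_zero_of_iso (Iso.refl _) eA (h B hB)) f
  have hB₀ : IsZero B := by
    rw [IsZero.iff_id_eq_zero]
    obtain ⟨ψ, hψ⟩ := Triangle.coyoneda_exact₂ _ (inv_rot_of_distTriang _ hBAC) (𝟙 B)
      (show 𝟙 B ≫ f = 0 by rw [hf, comp_zero])
    have hC : C⟦(-1 : ℤ)⟧ ∈ shiftSet 𝒞 G (-1) :=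
      ⟨C₀⟦(-1 : ℤ)⟧, hT.shiftG (shift_mem_shiftSet hC₀ (-1)), ⟨(shiftFunctor 𝒞 (-1)).mapIso eC⟩⟩
    exact hψ.trans (by rw [hT.hom_zero B hB _ hC ψ]; exact zero_comp)
  have : IsIso g := (Triangle.isZero₁_iff_isIso₂ _ hBAC).1 hB₀
  have eC₀ : C₀⟦(-1 : ℤ)⟧⟦(1 : ℤ)⟧ ≅ C₀ :=
    (shiftFunctorCompIsoId 𝒞 (-1 : ℤ) 1 (neg_add_cancel 1)).app C₀
  exact hT.isoG (eC₀.symm ≪≫ (shiftFunctor 𝒞 (1 : ℤ)).mapIso (asIso g ≪≫ eC).symm ≪≫ eA) hC₀ hA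

lemma mem_aisle_of_distTriang (hT : IsTStructureOn 𝒞 S L G) {X Y Z : 𝒞} {f : X ⟶ Y}
    {g : Y ⟶ Z} {h : Z ⟶ X⟦(1 : ℤ)⟧} (hXYZ : Triangle.mk f g h ∈ distTriang 𝒞)
    (hX : X⟦(1 : ℤ)⟧ ∈ L) (hY : Y ∈ L) (hZ : Z ∈ S) : Z ∈ L :=
  hT.mem_aisle_of_hom_eq_zero hZ fun V hV φ => by
    obtain ⟨τ, hτ⟩ : ∃ τ : X⟦(1 : ℤ)⟧ ⟶ V, φ = h ≫ τ :=
      Triangle.yoneda_exact₃ _ hXYZ φ (hT.hom_zero Y hY V hV _)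
    rw [hτ, hT.hom_zero _ hX V hV τ, comp_zero]

lemma mem_coaisle_of_distTriang (hT : IsTStructureOn 𝒞 S L G) (hS : IsTriangulatedSub 𝒞 S)
    {X Y Z : 𝒞} {f : X ⟶ Y} {g : Y ⟶ Z} {h : Z ⟶ X⟦(1 : ℤ)⟧}
    (hXYZ : Triangle.mk f g h ∈ distTriang 𝒞) (hX : X ∈ S) (hY : Y ∈ G) (hZ : Z ∈ G) : X ∈ G :=
  hT.mem_coaisle_of_hom_eq_zero hX (hS.shift _ X hX) fun P hP ψ => by
    obtain ⟨ψ', hψ'⟩ := Triangle.coyoneda_exact₂ _ (inv_rot_of_distTriang _ hXYZ) ψ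
      (hT.hom_shift_one_eq_zero hP hY (ψ ≫ f))
    rw [hψ', hT.hom_shift_one_eq_zero hP (hT.shiftG (shift_mem_shiftSet hZ (-1))) ψ']
    exact zero_comp

lemma coaisle_subset_of_aisle_subset {L' G' : Set 𝒞} (hT : IsTStructureOn 𝒞 S L G)
    (hT' : IsTStructureOn 𝒞 S L' G') (hS : IsTriangulatedSub 𝒞 S) (h : L ⊆ L') : G' ⊆ G :=
  fun A hA => hT.mem_coaisle_of_hom_eq_zero (hT'.subG hA) (hS.shift _ A (hT'.subG hA))
    fun _ hP f => hT'.hom_shift_one_eq_zero (h hP) hA f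

lemma mem_starSet_shiftSet (hT : IsTStructureOn 𝒞 S L G) (hS : IsTriangulatedSub 𝒞 S)
    {A : 𝒞} (hA : A ∈ S) (n : ℤ) :
    A ∈ starSet 𝒞 (shiftSet 𝒞 L n) (shiftSet 𝒞 G (n - 1)) := by
  have hA' := shift_mem_starSet (hT.cover _ (hS.shift (-n) A hA)) n
  refine mem_starSet_of_iso ((shiftFunctorCompIsoId 𝒞 (-n) n (neg_add_cancel n)).app A)
    (starSet_mono subset_rfl (shiftSet_shiftSet_subset ?_) hA')
  omega

end IsTStructureOn

namespace IsTStructure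

variable {L G : Set 𝒞}

lemma shift_mem_aisle (hU : IsTStructure 𝒞 L G) {A : 𝒞} (hA : A ∈ L) {k : ℤ} (hk : 0 ≤ k) :
    A⟦k⟧ ∈ L := by
  induction k, hk using Int.leInduction with
  | base => exact hU.isoL ((shiftFunctorZero 𝒞 ℤ).app A).symm hA trivial
  | succ k _ ih =>
    exact hU.isoL ((shiftFunctorAdd' 𝒞 k 1 (k + 1) rfl).app A).symm
      (IsTStructureOn.shift_one_mem_aisle hU ih trivial) trivial

lemma shiftSet_aisle_subset (hU : IsTStructure 𝒞 L G) {k : ℤ} (hk : 0 ≤ k) :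
    shiftSet 𝒞 L k ⊆ L := by
  rintro A ⟨B, hB, ⟨e⟩⟩
  exact hU.isoL e.symm (hU.shift_mem_aisle hB hk) trivial

lemma shiftSet_aisle_antitone (hU : IsTStructure 𝒞 L G) {i j : ℤ} (h : i ≤ j) :
    shiftSet 𝒞 L j ⊆ shiftSet 𝒞 L i := fun A hA =>
  ⟨A⟦-i⟧, hU.shiftSet_aisle_subset (by omega) (shift_mem_shiftSet_of_add_eq hA rfl),
    ⟨((shiftFunctorCompIsoId 𝒞 (-i) i (neg_add_cancel i)).app A).symm⟩⟩

lemma hom_eq_zero (hU : IsTStructure 𝒞 L G) {A B : 𝒞} {i j : ℤ} (hA : A ∈ shiftSet 𝒞 L i)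
    (hB : B ∈ shiftSet 𝒞 G j) (hij : j < i) (f : A ⟶ B) : f = 0 :=
  hom_eq_zero_of_shift (-(j + 1)) (hU.hom_zero _
    (hU.shiftSet_aisle_subset (by omega) (shift_mem_shiftSet_of_add_eq hA rfl)) _
    (shift_mem_shiftSet_of_add_eq hB (by omega))) f

lemma mem_shiftSet_aisle_of_hom_eq_zero (hU : IsTStructure 𝒞 L G) {A : 𝒞} (n : ℤ)
    (h : ∀ B ∈ shiftSet 𝒞 G n, ∀ f : A ⟶ B, f = 0) : A ∈ shiftSet 𝒞 L (n + 1) := by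
  have e : A⟦-(n + 1)⟧⟦n + 1⟧ ≅ A :=
    (shiftFunctorCompIsoId 𝒞 (-(n + 1)) (n + 1) (neg_add_cancel _)).app A
  refine ⟨A⟦-(n + 1)⟧, ?_, ⟨e.symm⟩⟩
  refine IsTStructureOn.mem_aisle_of_hom_eq_zero hU trivial fun B hB f => ?_
  exact hom_eq_zero_of_shift (n + 1) (hom_eq_zero_of_iso e (Iso.refl _)
    (h _ (shift_mem_shiftSet_of_add_eq hB (by omega)))) f

lemma mem_coaisle_of_hom_eq_zero (hU : IsTStructure 𝒞 L G) {A : 𝒞}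
    (h : ∀ B ∈ shiftSet 𝒞 L 1, ∀ f : B ⟶ A, f = 0) : A ∈ G :=
  IsTStructureOn.mem_coaisle_of_hom_eq_zero hU trivial trivial fun _ hP =>
    h _ (shift_mem_shiftSet hP 1)

end IsTStructure

variable {L G S Y₁ Y₂ : Set 𝒞} {m : ℤ}

lemma starSet_inter_shiftSet_coaisle_eq (hU : IsTStructure 𝒞 L G)
    (hS : IsTriangulatedSub 𝒞 S) (hUS : IsTStructureOn 𝒞 S (S ∩ L) (S ∩ G))
    (hY : IsTStructureOn 𝒞 S Y₁ Y₂) (h1 : S ∩ shiftSet 𝒞 L m ⊆ Y₁) :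
    starSet 𝒞 (shiftSet 𝒞 L m) (Y₁ ∩ shiftSet 𝒞 G (m - 1)) =
      starSet 𝒞 (shiftSet 𝒞 L m) Y₁ := by
  refine (starSet_mono subset_rfl Set.inter_subset_left).antisymm ?_
  rintro A ⟨X, Y, f, g, h, hX, hY₁, hXAY⟩
  obtain ⟨X', Y', a, t, w, hX', hY', hXYY⟩ := hUS.mem_starSet_shiftSet hS (hY.subL hY₁) m
  have hX'S : X' ∈ S := hS.shiftSet_subset Set.inter_subset_left m hX'
  have hX'L : X' ∈ shiftSet 𝒞 L m := shiftSet_mono Set.inter_subset_right m hX'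
  have hX'Y₁ : X'⟦(1 : ℤ)⟧ ∈ Y₁ := h1 ⟨hS.shift 1 X' hX'S,
    hU.shiftSet_aisle_antitone (by omega) (shift_mem_shiftSet_of_add_eq hX'L rfl)⟩
  have hY'Y₁ : Y' ∈ Y₁ := hY.mem_aisle_of_distTriang hXYY hX'Y₁ hY₁
    (hS.shiftSet_subset Set.inter_subset_left (m - 1) hY')
  obtain ⟨Z, q, r, hAYZ⟩ := distinguished_cocone_triangle (g ≫ t)
  have hZ : Z ∈ shiftSet 𝒞 L (m + 1) := hU.mem_shiftSet_aisle_of_hom_eq_zero m fun W hW =>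
    cone_comp_hom_eq_zero (rot_of_distTriang _ hXAY) (rot_of_distTriang _ hXYY) hAYZ
      (hU.hom_eq_zero (shift_mem_shiftSet_of_add_eq hX rfl) hW (by omega))
      (hU.hom_eq_zero (shift_mem_shiftSet_of_add_eq hX'L rfl) hW (by omega))
  exact obj₂_mem_starSet (inv_rot_of_distTriang _ hAYZ)
    (shift_mem_shiftSet_of_add_eq hZ (by omega))
    ⟨hY'Y₁, shiftSet_mono Set.inter_subset_right (m - 1) hY'⟩

lemma starSet_shiftSet_inter_aisle_eq (hU : IsTStructure 𝒞 L G)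
    (hS : IsTriangulatedSub 𝒞 S) (hUS : IsTStructureOn 𝒞 S (S ∩ L) (S ∩ G))
    (hY : IsTStructureOn 𝒞 S Y₁ Y₂) (h2 : Y₁ ⊆ S ∩ L) :
    starSet 𝒞 (shiftSet 𝒞 (shiftSet 𝒞 Y₂ (-1) ∩ L) 1) G = starSet 𝒞 Y₂ G := by
  have hY₂ : shiftSet 𝒞 Y₂ 0 ⊆ Y₂ := hY.shiftSet_zero_coaisle_subset hS.iso
  refine (starSet_mono ?_ subset_rfl).antisymm ?_
  · exact (shiftSet_mono Set.inter_subset_left 1).trans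
      ((shiftSet_shiftSet_subset (neg_add_cancel 1)).trans hY₂)
  rintro A ⟨Z, W, f, g, h, hZ, hW, hZAW⟩
  obtain ⟨Z₁, Z₀, e, p, v, hZ₁, hZ₀, hZZ⟩ := hUS.mem_starSet_shiftSet hS (hY.subG hZ) 1
  rw [sub_self] at hZ₀
  have hZ₀Y₂ : Z₀ ∈ Y₂ :=
    hY₂ (shiftSet_mono (hY.coaisle_subset_of_aisle_subset hUS hS h2) 0 hZ₀)
  have hZ₁Y₂ : Z₁ ∈ Y₂ := hY.mem_coaisle_of_distTriang hS hZZ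
    (hS.shiftSet_subset Set.inter_subset_left 1 hZ₁) hZ hZ₀Y₂
  obtain ⟨Q, q, r, hZ₁AQ⟩ := distinguished_cocone_triangle (e ≫ f)
  have hQ : Q ∈ G := hU.mem_coaisle_of_hom_eq_zero fun V hV =>
    hom_cone_comp_eq_zero hZZ hZAW hZ₁AQ
      (hU.hom_eq_zero hV (shiftSet_mono Set.inter_subset_right 0 hZ₀) (by omega))
      (hU.hom_eq_zero hV (mem_shiftSet_zero hW) (by omega))
  exact obj₂_mem_starSet hZ₁AQ
    (mem_shiftSet_neg_inter hZ₁Y₂ (shiftSet_mono Set.inter_subset_right 1 hZ₁)) hQ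

end

theorem stmt17 (L G : Set D) (hU : IsTStructure D L G) (m : ℤ)
    (S : Set D) (hS : IsTriangulatedSub D S)
    (hUS : IsTStructureOn D S (S ∩ L) (S ∩ G))
    (Y₁ Y₂ : Set D) (hY : IsTStructureOn D S Y₁ Y₂)
    (h1 : S ∩ shiftSet D L m ⊆ Y₁) (h2 : Y₁ ⊆ S ∩ L) :
    starSet D (shiftSet D L m) (Y₁ ∩ shiftSet D G (m - 1)) =
      starSet D (shiftSet D L m) Y₁ ∧
    starSet D (shiftSet D (shiftSet D Y₂ (-1) ∩ L) 1) G = starSet D Y₂ G :=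
  ⟨starSet_inter_shiftSet_coaisle_eq hU hS hUS hY h1,
    starSet_shiftSet_inter_aisle_eq hU hS hUS hY h2⟩
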